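/- The function h(ω) = √ω + ε·log(ε) − ε·log(√ω + ε) is concave on [0,∞), i.e., for all s, s⁺ ≥ 0, h(s⁺) − h(s) ≤ h'(s)(s⁺ − s) where h'(s) = 1/(2(√s + ε)). -/

import Mathlib

/-!
Substituting `ω = t²`, the tangent-line inequality at `s = a²` says that
`G t = t - ε log (t + ε) - t² / (2 (a + ε))` is maximal on `t ≥ 0` at `t = a`.
This holds because `G' t = t (a - t) / ((t + ε) (a + ε))` is nonnegative on `[0, a]` and
nonpositive on `[a, ∞)`.
-/

open Real Set

noncomputable def tangentGap (ε a t : ℝ) : ℝ :=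
  t - ε * log (t + ε) - t ^ 2 / (2 * (a + ε))

section TangentGap

variable {ε a : ℝ}

lemma hasDerivAt_tangentGap (hε : 0 < ε) (ha : 0 ≤ a) {t : ℝ} (ht : 0 ≤ t) :
    HasDerivAt (tangentGap ε a) (t * (a - t) / ((t + ε) * (a + ε))) t := by
  have htε : t + ε ≠ 0 := by positivity
  have haε : a + ε ≠ 0 := by positivity
  have hlog : HasDerivAt (fun t => log (t + ε)) (1 / (t + ε)) t := by
    simpa using ((hasDerivAt_id t).add_const ε).log htε
  refine (((hasDerivAt_id' t).sub (hlog.const_mul ε)).sub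
    ((hasDerivAt_pow 2 t).div_const (2 * (a + ε)))).congr_deriv ?_
  field_simp
  ring

lemma isMaxOn_tangentGap (hε : 0 < ε) (ha : 0 ≤ a) : IsMaxOn (tangentGap ε a) (Ici 0) a := by
  have hderiv := fun t (ht : 0 ≤ t) => hasDerivAt_tangentGap hε ha ht
  refine isMaxOn_Ici_of_deriv (hderiv 0 le_rfl).continuousAt (hderiv a ha).continuousAt
    (fun t ht => (hderiv t ht.1.le).differentiableAt.differentiableWithinAt)
    (fun t ht => (hderiv t (ha.trans ht.le)).differentiableAt.differentiableWithinAt)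
    (fun t ht => ?_) (fun t ht => ?_)
  · obtain ⟨ht0, hta⟩ := ht
    rw [(hderiv t ht0.le).deriv]
    have : 0 ≤ a - t := by linarith
    positivity
  · have ht0 : 0 ≤ t := ha.trans (le_of_lt ht)
    rw [(hderiv t ht0).deriv]
    exact div_nonpos_of_nonpos_of_nonneg
      (mul_nonpos_of_nonneg_of_nonpos ht0 (by linarith [mem_Ioi.1 ht])) (by positivity)

end TangentGap

theorem stmt2 (ε : ℝ) (hε : 0 < ε)
    (h : ℝ → ℝ)
    (hdef : ∀ ω, h ω = Real.sqrt ω + ε * Real.log ε - ε * Real.log (Real.sqrt ω + ε)) :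
    ∀ s ≥ (0:ℝ), ∀ splus ≥ (0:ℝ),
      h splus - h s ≤ (1 / (2 * (Real.sqrt s + ε))) * (splus - s) := by
  intro s hs splus hsplus
  have hmax : tangentGap ε √s √splus ≤ tangentGap ε √s √s :=
    isMaxOn_iff.1 (isMaxOn_tangentGap hε (sqrt_nonneg s)) _ (mem_Ici.2 (sqrt_nonneg splus))
  have hslope : 1 / (2 * (√s + ε)) * (splus - s) =
      √splus ^ 2 / (2 * (√s + ε)) - √s ^ 2 / (2 * (√s + ε)) := by
    rw [sq_sqrt hs, sq_sqrt hsplus]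
    ring
  rw [hdef, hdef, hslope]
  unfold tangentGap at hmax
  linarith
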